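/- arXiv:0908.0784 — 2 statements merged into one kernel-verified Lean document; each statement's English description precedes it below -/
import Mathlib

section
/- Let n ≥ 2, λ₀ > 0 with λ₀ ≠ (n-1)²/(4n²), and λ ≥ λ₀. Define α₊ = (n-1)/2 if λ₀ > (n-1)²/(4n²), and α₊ = ((n-1) - √((n-1)² - 4n²λ₀))/2 if 0 < λ₀ < (n-1)²/(4n²). Define c_E as (n-1)/2 in the first case and 2n²λ₀/(n-1) in the second. If X : ℝ → ℝ is a C² solution of the damped oscillator equation Ẍ + (n-1)Ẋ + n²λX = 0, then the energy E(t) = (1/2)Ẋ(t)² + (n²λ/2)X(t)² + c_E X(t)Ẋ(t) satisfies dE/dt ≤ -2α₊ E(t) for all t. -/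
/-!
Along a solution of `ẍ + a ẋ + k x = 0` the energy `E = ½ẋ² + (k/2)x² + c x ẋ` changes at the rate
`(c - a) ẋ² - c a x ẋ - c k x²`, a quadratic form in `(x, ẋ)`. For `c = α = a/2` the rate is exactly
`-2αE`. In the overdamped case `4k₀ ≤ a²`, with `D = √(a² - 4k₀)`, `α = (a - D)/2` and `c = 2k₀/a`,
the identity
`2a(a + D)(E' + 2αE) = -D(((a + D)ẋ + 2k₀x)² + 4k₀(k - k₀)x²)`
shows `E' + 2αE ≤ 0` as soon as `k ≥ k₀ ≥ 0`.
-/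

open Real

noncomputable section

def oscillatorEnergy (k c x v : ℝ) : ℝ := 1 / 2 * v ^ 2 + k / 2 * x ^ 2 + c * x * v

def dampedEnergyRate (a k c x v : ℝ) : ℝ := (c - a) * v ^ 2 - c * a * x * v - c * k * x ^ 2

end

theorem hasDerivAt_oscillatorEnergy_of_ode {X : ℝ → ℝ} {a k c t : ℝ}
    (hX : DifferentiableAt ℝ X t) (hX' : DifferentiableAt ℝ (deriv X) t)
    (hode : deriv (deriv X) t + a * deriv X t + k * X t = 0) :
    HasDerivAt (fun s => oscillatorEnergy k c (X s) (deriv X s))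
      (dampedEnergyRate a k c (X t) (deriv X t)) t := by
  have hE : HasDerivAt (fun s => oscillatorEnergy k c (X s) (deriv X s))
      (1 / 2 * (2 * deriv X t ^ 1 * deriv (deriv X) t) + k / 2 * (2 * X t ^ 1 * deriv X t)
        + (c * deriv X t * deriv X t + c * X t * deriv (deriv X) t)) t :=
    (((hX'.hasDerivAt.pow 2).const_mul (1 / 2)).add ((hX.hasDerivAt.pow 2).const_mul (k / 2))).add
      ((hX.hasDerivAt.const_mul c).mul hX'.hasDerivAt)
  refine hE.congr_deriv ?_
  simp only [dampedEnergyRate]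
  linear_combination (deriv X t + c * X t) * hode

theorem dampedEnergyRate_half_damping (a k x v : ℝ) :
    dampedEnergyRate a k (a / 2) x v = -2 * (a / 2) * oscillatorEnergy k (a / 2) x v := by
  simp only [dampedEnergyRate, oscillatorEnergy]
  ring

theorem dampedEnergyRate_le_of_overdamped {a k₀ k x v : ℝ} (ha : 0 < a) (hk₀ : 0 ≤ k₀)
    (hdisc : 4 * k₀ ≤ a ^ 2) (hk : k₀ ≤ k) :
    dampedEnergyRate a k (2 * k₀ / a) x v
      ≤ -2 * ((a - √(a ^ 2 - 4 * k₀)) / 2) * oscillatorEnergy k (2 * k₀ / a) x v := by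
  set D := √(a ^ 2 - 4 * k₀)
  have hD : D ^ 2 = a ^ 2 - 4 * k₀ := sq_sqrt (by linarith)
  have hc : 2 * k₀ / a * a = 2 * k₀ := div_mul_cancel₀ _ ha.ne'
  have hsos : 2 * a * (a + D) * (dampedEnergyRate a k (2 * k₀ / a) x v
        - -2 * ((a - D) / 2) * oscillatorEnergy k (2 * k₀ / a) x v)
      = -(D * (((a + D) * v + 2 * k₀ * x) ^ 2 + 4 * k₀ * (k - k₀) * x ^ 2)) := by
    simp only [dampedEnergyRate, oscillatorEnergy]
    linear_combination ((a + D) * v ^ 2 - k * a * x ^ 2) * hD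
      + (2 * (a + D) * v ^ 2 - 2 * D * (a + D) * x * v - 2 * k * (a + D) * x ^ 2) * hc
  have hrhs : -(D * (((a + D) * v + 2 * k₀ * x) ^ 2 + 4 * k₀ * (k - k₀) * x ^ 2)) ≤ 0 := by
    have : 0 ≤ k - k₀ := by linarith
    simp only [neg_nonpos]
    positivity
  have hpos : 0 < 2 * a * (a + D) := by positivity
  rw [← hsos] at hrhs
  linarith [nonpos_of_mul_nonpos_right hrhs hpos]

theorem damped_oscillator_energy_decay_general
    (n lam0 lam alphaPlus cE : ℝ) (hn : 2 ≤ n) (hlam0 : 0 < lam0)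
    (hlam : lam0 ≤ lam)
    (halpha : alphaPlus = if (n - 1) ^ 2 / (4 * n ^ 2) < lam0 then (n - 1) / 2
                else ((n - 1) - Real.sqrt ((n - 1) ^ 2 - 4 * n ^ 2 * lam0)) / 2)
    (hcE : cE = if (n - 1) ^ 2 / (4 * n ^ 2) < lam0 then (n - 1) / 2
                else 2 * n ^ 2 * lam0 / (n - 1))
    (X : ℝ → ℝ) (hX : ContDiff ℝ 2 X)
    (hode : ∀ t, deriv (deriv X) t + (n - 1) * deriv X t + n ^ 2 * lam * X t = 0) :
    ∀ t, deriv (fun s => (1 / 2) * (deriv X s) ^ 2 + (n ^ 2 * lam / 2) * (X s) ^ 2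
            + cE * X s * deriv X s) t
      ≤ -2 * alphaPlus * ((1 / 2) * (deriv X t) ^ 2 + (n ^ 2 * lam / 2) * (X t) ^ 2
            + cE * X t * deriv X t) := by
  intro t
  have hX' : ContDiff ℝ 1 (deriv X) := hX.deriv'
  have hE := hasDerivAt_oscillatorEnergy_of_ode (c := cE) (hX.differentiable two_ne_zero t)
    (hX'.differentiable one_ne_zero t) (hode t)
  change deriv (fun s => oscillatorEnergy (n ^ 2 * lam) cE (X s) (deriv X s)) t
    ≤ -2 * alphaPlus * oscillatorEnergy (n ^ 2 * lam) cE (X t) (deriv X t)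
  rw [hE.deriv]
  split_ifs at halpha hcE with hcase
  · subst halpha hcE
    exact (dampedEnergyRate_half_damping _ _ _ _).le
  · have hdisc : 4 * (n ^ 2 * lam0) ≤ (n - 1) ^ 2 := by
      rw [not_lt, le_div_iff₀ (by positivity)] at hcase
      linarith
    subst halpha hcE
    have h := dampedEnergyRate_le_of_overdamped (x := X t) (v := deriv X t) (by linarith)
      (by positivity) hdisc (mul_le_mul_of_nonneg_left hlam (sq_nonneg n))
    simpa only [← mul_assoc] using h

/-- the corrected energy of a solution of the damped oscillator
equation `Ẍ + (n-1)Ẋ + n²λX = 0` satisfies `dE/dt ≤ -2α₊E`. -/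
theorem damped_oscillator_energy_decay
    (n lam0 lam alphaPlus cE : ℝ) (hn : 2 ≤ n) (hlam0 : 0 < lam0)
    (hne : lam0 ≠ (n - 1) ^ 2 / (4 * n ^ 2)) (hlam : lam0 ≤ lam)
    (halpha : alphaPlus = if (n - 1) ^ 2 / (4 * n ^ 2) < lam0 then (n - 1) / 2
                else ((n - 1) - Real.sqrt ((n - 1) ^ 2 - 4 * n ^ 2 * lam0)) / 2)
    (hcE : cE = if (n - 1) ^ 2 / (4 * n ^ 2) < lam0 then (n - 1) / 2
                else 2 * n ^ 2 * lam0 / (n - 1))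
    (X : ℝ → ℝ) (hX : ContDiff ℝ 2 X)
    (hode : ∀ t, deriv (deriv X) t + (n - 1) * deriv X t + n ^ 2 * lam * X t = 0) :
    ∀ t, deriv (fun s => (1 / 2) * (deriv X s) ^ 2 + (n ^ 2 * lam / 2) * (X s) ^ 2
            + cE * X s * deriv X s) t
      ≤ -2 * alphaPlus * ((1 / 2) * (deriv X t) ^ 2 + (n ^ 2 * lam / 2) * (X t) ^ 2
            + cE * X t * deriv X t) :=
  damped_oscillator_energy_decay_general n lam0 lam alphaPlus cE hn hlam0 hlam halpha hcE X hX hode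
end

section
/- Let 𝓛 be a nonnegative self-adjoint operator on a Hilbert space with smallest nonzero eigenvalue λ_min, let 0 < λ₀ < λ_min with λ₀ ≠ (n-1)²/(4n²), and define c_E as in the damped-oscillator analysis. Then for all u, v in the orthogonal complement of ker 𝓛, the quadratic form Q(u,v) = ⟨v, v⟩ + n²⟨u, 𝓛u⟩ + 2c_E⟨v, u⟩ is positive definite: there is a constant c > 0 with Q(u,v) ≥ c(‖u‖² + ‖v‖²). -/
/-!
Expanding in the eigenbasis, `u ⊥ ker L` gives the spectral gap bound `⟪u, L u⟫ ≥ λ_min ‖u‖²`.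
Together with Cauchy–Schwarz the form then dominates the scalar form
`y² + n² λ_min x² - 2 |c_E| x y` in `x = ‖u‖`, `y = ‖v‖`, which is positive definite because
`c_E² ≤ n² λ₀ < n² λ_min`.
-/

open scoped RealInnerProductSpace

namespace HilbertBasis

variable {H : Type*} [NormedAddCommGroup H] [InnerProductSpace ℝ H]
  {ι : Type*} (b : HilbertBasis ι ℝ H) {L : H →L[ℝ] H} {μ : ι → ℝ}

theorem inner_apply_of_eigen (heig : ∀ i, L (b i) = μ i • b i) (u : H) (i : ι) :
    ⟪b i, L u⟫ = μ i * ⟪b i, u⟫ := by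
  classical
  have hsum := ((b.hasSum_repr u).mapL L).mapL (innerSL ℝ (b i))
  simp only [map_smul, heig, innerSL_apply_apply, smul_eq_mul,
    orthonormal_iff_ite.mp b.orthonormal, mul_ite, mul_one, mul_zero] at hsum
  rw [hsum.unique (hasSum_single i fun j hj => if_neg (Ne.symm hj)), if_pos rfl,
    b.repr_apply_apply, mul_comm]

theorem mul_norm_sq_le_inner_apply (heig : ∀ i, L (b i) = μ i • b i) {lamMin : ℝ}
    (hmin : ∀ i, μ i = 0 ∨ lamMin ≤ μ i) {u : H} (hu : ∀ w : H, L w = 0 → ⟪w, u⟫ = 0) :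
    lamMin * ‖u‖ ^ 2 ≤ ⟪u, L u⟫ := by
  have hnorm := (b.hasSum_inner_mul_inner u u).mul_left lamMin
  rw [real_inner_self_eq_norm_sq] at hnorm
  refine hasSum_le (fun i => ?_) hnorm (b.hasSum_inner_mul_inner u (L u))
  rw [b.inner_apply_of_eigen heig]
  rcases hmin i with hzero | hgap
  · have hker : L (b i) = 0 := by rw [heig, hzero, zero_smul]
    simp [hu _ hker]
  · rw [real_inner_comm u (b i)]
    nlinarith [sq_nonneg ⟪b i, u⟫]

end HilbertBasis

theorem exists_mul_sq_add_sq_le_of_sq_lt {a c : ℝ} (h : c ^ 2 < a) :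
    ∃ k > 0, ∀ x y : ℝ, k * (x ^ 2 + y ^ 2) ≤ y ^ 2 + a * x ^ 2 + 2 * c * x * y := by
  have hc : 0 < 1 + c ^ 2 := by positivity
  have ha : 0 < a + 1 := by linarith [sq_nonneg c]
  refine ⟨(a - c ^ 2) / (a + 1), div_pos (by linarith) ha, fun x y => ?_⟩
  rw [div_mul_eq_mul_div, div_le_iff₀ ha]
  -- `(1 + c²)` times the difference of the two sides is a sum of two squares.
  nlinarith [sq_nonneg ((1 + c ^ 2) * y + c * (a + 1) * x), sq_nonneg ((a - c ^ 2) * x)]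

theorem exists_mul_norm_sq_add_le_of_sq_lt {E : Type*} [NormedAddCommGroup E]
    [InnerProductSpace ℝ E] {a c : ℝ} (h : c ^ 2 < a) :
    ∃ k > 0, ∀ u v : E, k * (‖u‖ ^ 2 + ‖v‖ ^ 2) ≤ ‖v‖ ^ 2 + a * ‖u‖ ^ 2 + 2 * c * ⟪v, u⟫ := by
  obtain ⟨k, hk, hquad⟩ := exists_mul_sq_add_sq_le_of_sq_lt (a := a) (c := -|c|) (by simpa using h)
  refine ⟨k, hk, fun u v => ?_⟩
  have hcross : -(2 * |c| * (‖v‖ * ‖u‖)) ≤ 2 * c * ⟪v, u⟫ :=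
    calc -(2 * |c| * (‖v‖ * ‖u‖)) ≤ -|2 * c * ⟪v, u⟫| := by
          rw [abs_mul, abs_mul, abs_two]
          gcongr
          exact abs_real_inner_le_norm v u
      _ ≤ 2 * c * ⟪v, u⟫ := neg_abs_le _
  linarith [hquad ‖u‖ ‖v‖]

/-- The constant `c_E` of the corrected energy. -/
noncomputable def energyCorrectionCoeff (n lam0 : ℝ) : ℝ :=
  if (n - 1) ^ 2 / (4 * n ^ 2) < lam0 then (n - 1) / 2 else 2 * n ^ 2 * lam0 / (n - 1)

theorem energyCorrectionCoeff_sq_le {n lam0 : ℝ} (hn : n ≠ 0) (hlam0 : 0 ≤ lam0) :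
    energyCorrectionCoeff n lam0 ^ 2 ≤ n ^ 2 * lam0 := by
  have hn2 : 0 < 4 * n ^ 2 := by positivity
  unfold energyCorrectionCoeff
  split_ifs with hlarge
  · rw [div_lt_iff₀ hn2] at hlarge
    nlinarith
  · rw [not_lt, le_div_iff₀ hn2] at hlarge
    rcases eq_or_ne n 1 with rfl | hn1
    · simpa using hlam0
    rw [div_pow, div_le_iff₀ (by positivity)]
    nlinarith [mul_le_mul_of_nonneg_left hlarge (by positivity : 0 ≤ n ^ 2 * lam0)]

theorem corrected_energy_coercive_general
    {H : Type*} [NormedAddCommGroup H] [InnerProductSpace ℝ H]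
    {ι : Type*} (b : HilbertBasis ι ℝ H)
    (L : H →L[ℝ] H) (μ : ι → ℝ)
    (heig : ∀ i, L (b i) = μ i • b i)
    (lamMin : ℝ)
    (hmin : ∀ i, μ i = 0 ∨ lamMin ≤ μ i)
    (n lam0 cE : ℝ) (hn : 2 ≤ n)
    (hlam0 : 0 < lam0) (hlt : lam0 < lamMin)
    (hcE : cE = if (n - 1) ^ 2 / (4 * n ^ 2) < lam0 then (n - 1) / 2
                else 2 * n ^ 2 * lam0 / (n - 1)) :
    ∃ c : ℝ, 0 < c ∧ ∀ u v : H,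
      (∀ w : H, L w = 0 → ⟪w, u⟫ = 0) → (∀ w : H, L w = 0 → ⟪w, v⟫ = 0) →
      c * (‖u‖ ^ 2 + ‖v‖ ^ 2) ≤ ‖v‖ ^ 2 + n ^ 2 * ⟪u, L u⟫ + 2 * cE * ⟪v, u⟫ := by
  have hn0 : n ≠ 0 := by positivity
  have hcE_sq : cE ^ 2 < n ^ 2 * lamMin :=
    calc cE ^ 2 ≤ n ^ 2 * lam0 := hcE ▸ energyCorrectionCoeff_sq_le hn0 hlam0.le
      _ < n ^ 2 * lamMin := by gcongr
  obtain ⟨c, hc, hcoercive⟩ := exists_mul_norm_sq_add_le_of_sq_lt (E := H) hcE_sq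
  refine ⟨c, hc, fun u v hu _ => (hcoercive u v).trans ?_⟩
  have hgap := mul_le_mul_of_nonneg_left (b.mul_norm_sq_le_inner_apply heig hmin hu) (sq_nonneg n)
  linarith

/-- coercivity of the corrected energy.  For a nonnegative
self-adjoint operator `𝓛` with smallest nonzero eigenvalue `λ_min`, and
`0 < λ₀ < λ_min` with `λ₀ ≠ (n-1)²/(4n²)`, the quadratic form
`Q(u,v) = ‖v‖² + n²⟨u,𝓛u⟩ + 2c_E⟨v,u⟩` is positive definite on
`(ker 𝓛)^⊥ × (ker 𝓛)^⊥`. -/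
theorem corrected_energy_coercive
    {H : Type*} [NormedAddCommGroup H] [InnerProductSpace ℝ H] [CompleteSpace H]
    {ι : Type*} (b : HilbertBasis ι ℝ H)
    (L : H →L[ℝ] H) (μ : ι → ℝ)
    (heig : ∀ i, L (b i) = μ i • b i)
    (hnonneg : ∀ i, 0 ≤ μ i)
    (lamMin : ℝ) (hlamMin : 0 < lamMin)
    (hmin : ∀ i, μ i = 0 ∨ lamMin ≤ μ i)
    (n lam0 cE : ℝ) (hn : 2 ≤ n)
    (hlam0 : 0 < lam0) (hlt : lam0 < lamMin)
    (hne : lam0 ≠ (n - 1) ^ 2 / (4 * n ^ 2))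
    (hcE : cE = if (n - 1) ^ 2 / (4 * n ^ 2) < lam0 then (n - 1) / 2
                else 2 * n ^ 2 * lam0 / (n - 1)) :
    ∃ c : ℝ, 0 < c ∧ ∀ u v : H,
      (∀ w : H, L w = 0 → ⟪w, u⟫ = 0) → (∀ w : H, L w = 0 → ⟪w, v⟫ = 0) →
      c * (‖u‖ ^ 2 + ‖v‖ ^ 2) ≤ ‖v‖ ^ 2 + n ^ 2 * ⟪u, L u⟫ + 2 * cE * ⟪v, u⟫ :=
  corrected_energy_coercive_general b L μ heig lamMin hmin n lam0 cE hn hlam0 hlt hcE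
end
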